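/- Let Ω ⊆ ℝ^d be open, let p ∈ ℕ ∪ {∞} with p ≥ 1, let ψ : Ω → Ω be of class C^p on Ω, injective, with derivative ψ′(x) invertible (det[ψ′(x)] ≠ 0) at every x ∈ Ω, and strongly run-away; let ω : Ω → 𝕂 be of class C^p and zero-free (ω(x) ≠ 0 for all x ∈ Ω). Then for every function f : Ω → 𝕂 of class C^p and every compact set K ⊆ Ω there exist N ≥ 1 and a function g : Ω → 𝕂 of class C^p such that g(x) = f(x) for every x ∈ K and C_{ω,ψ}^N g = g, i.e., for every x ∈ Ω, (∏_{j=0}^{N−1} ω(ψ_j(x)))·g(ψ_N(x)) = g(x). -/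

import Mathlib

open Set Function Filter Topology
open scoped Manifold

/-!
Cut `f` off to `F = χ • f` with `χ = 1` on `K` and `C = tsupport χ` a compact subset of `Ω`.
Choose `N` with `ψ_n(C) ∩ C = ∅` for all `n ≥ N`, and write `C_{ω,ψ}^N g = w · (g ∘ φ)` with
`φ = ψ_N`, `w = ∏_{j<N} ω ∘ ψ_j`. The inverse function theorem makes `φ` a `C^p`
diffeomorphism of `Ω` onto the open set `φ(Ω)`, so `C_{ω,ψ}^N` has the `C^p` partial inverse
`F ↦ (F / w) ∘ φ⁻¹` on `φ(Ω)`, extended by `0`; it preserves compact support in `Ω`.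
Then `g = ∑_{k ∈ ℤ} (C_{ω,ψ}^N)^k F` works: strong run-away makes the sum locally finite, hence
`C^p`; reindexing the sum shows that `g` is fixed by `C_{ω,ψ}^N`; and on `C` every term with
`k ≠ 0` vanishes because `φ^n(C) ∩ C = ∅` for `n ≥ 1`.
-/

section RunAway

variable {X : Type*} [TopologicalSpace X] {ψ : X → X} {Ω : Set X}

def IsStronglyRunAway (ψ : X → X) (Ω : Set X) : Prop :=
  ∀ K : Set X, K ⊆ Ω → IsCompact K → ∃ N : ℕ, ∀ n, N ≤ n → (ψ^[n] '' K) ∩ K = ∅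

theorem IsStronglyRunAway.iterate (h : IsStronglyRunAway ψ Ω) {N : ℕ} (hN : 0 < N) :
    IsStronglyRunAway ψ^[N] Ω := by
  intro K hKΩ hK
  obtain ⟨M, hM⟩ := h K hKΩ hK
  refine ⟨M, fun n hn => ?_⟩
  rw [← iterate_mul]
  exact hM _ (hn.trans (Nat.le_mul_of_pos_left n hN))

theorem IsStronglyRunAway.eventually_disjoint_image (h : IsStronglyRunAway ψ Ω) {K L : Set X}
    (hK : IsCompact K) (hKΩ : K ⊆ Ω) (hL : IsCompact L) (hLΩ : L ⊆ Ω) :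
    ∀ᶠ n in atTop, Disjoint (ψ^[n] '' K) L := by
  obtain ⟨N, hN⟩ := h (K ∪ L) (union_subset hKΩ hLΩ) (hK.union hL)
  refine eventually_atTop.mpr ⟨N, fun n hn => disjoint_iff_inter_eq_empty.mpr ?_⟩
  rw [← subset_empty_iff, ← hN n hn]
  exact inter_subset_inter (image_mono subset_union_left) subset_union_right

end RunAway

section InverseFunction

variable {E F : Type*} [NormedAddCommGroup E] [NormedSpace ℝ E] [CompleteSpace E]
  [NormedAddCommGroup F] [NormedSpace ℝ F] {Ω : Set E} {φ : E → F} {p : ℕ∞}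

theorem isOpen_image_of_hasFDerivAt_equiv (hΩ : IsOpen Ω) (hp : p ≠ 0)
    (hφ : ContDiffOn ℝ p φ Ω)
    (hφ' : ∀ x ∈ Ω, ∃ e : E ≃L[ℝ] F, HasFDerivAt φ (e : E →L[ℝ] F) x) :
    IsOpen (φ '' Ω) := by
  have hp' : (p : WithTop ℕ∞) ≠ 0 := by exact_mod_cast hp
  rw [isOpen_iff_mem_nhds]
  rintro _ ⟨a, ha, rfl⟩
  obtain ⟨e, he⟩ := hφ' a ha
  rw [← ((hφ.contDiffAt (hΩ.mem_nhds ha)).hasStrictFDerivAt' he hp').map_nhds_eq_of_equiv]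
  exact image_mem_map (hΩ.mem_nhds ha)

theorem contDiffOn_invFunOn_image (hΩ : IsOpen Ω) (hp : p ≠ 0) (hφ : ContDiffOn ℝ p φ Ω)
    (hinj : InjOn φ Ω) (hφ' : ∀ x ∈ Ω, ∃ e : E ≃L[ℝ] F, HasFDerivAt φ (e : E →L[ℝ] F) x) :
    ContDiffOn ℝ p (invFunOn φ Ω) (φ '' Ω) := by
  have hp' : (p : WithTop ℕ∞) ≠ 0 := by exact_mod_cast hp
  rintro _ ⟨a, ha, rfl⟩
  obtain ⟨e, he⟩ := hφ' a ha
  have hφa : ContDiffAt ℝ p φ a := hφ.contDiffAt (hΩ.mem_nhds ha)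
  have hleft : ∀ᶠ x in 𝓝 a, invFunOn φ Ω (φ x) = x :=
    eventually_of_mem (hΩ.mem_nhds ha) fun x hx => hinj.leftInvOn_invFunOn hx
  exact ((hφa.to_localInverse he hp').congr_of_eventuallyEq
    ((hφa.hasStrictFDerivAt' he hp').localInverse_unique hleft)).contDiffWithinAt

end InverseFunction

section SelfEmbedding

variable {E : Type*} [NormedAddCommGroup E] [NormedSpace ℝ E] {Ω : Set E} {φ : E → E} {p : ℕ∞}

structure IsContDiffSelfEmbedding (p : ℕ∞) (φ : E → E) (Ω : Set E) : Prop where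
  mapsTo : MapsTo φ Ω Ω
  injOn : InjOn φ Ω
  contDiffOn : ContDiffOn ℝ p φ Ω
  hasFDerivAt_equiv : ∀ x ∈ Ω, ∃ e : E ≃L[ℝ] E, HasFDerivAt φ (e : E →L[ℝ] E) x

theorem IsContDiffSelfEmbedding.iterate (h : IsContDiffSelfEmbedding p φ Ω) (n : ℕ) :
    IsContDiffSelfEmbedding p φ^[n] Ω := by
  induction n with
  | zero =>
    exact ⟨mapsTo_id Ω, injOn_id Ω, contDiffOn_id,
      fun x _ => ⟨ContinuousLinearEquiv.refl ℝ E, hasFDerivAt_id x⟩⟩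
  | succ n ih =>
    rw [iterate_succ']
    refine ⟨h.mapsTo.comp ih.mapsTo, h.injOn.comp ih.injOn ih.mapsTo,
      h.contDiffOn.comp ih.contDiffOn ih.mapsTo, fun x hx => ?_⟩
    obtain ⟨e₁, he₁⟩ := ih.hasFDerivAt_equiv x hx
    obtain ⟨e₂, he₂⟩ := h.hasFDerivAt_equiv _ (ih.mapsTo hx)
    exact ⟨e₁.trans e₂, he₂.comp x he₁⟩

theorem isContDiffSelfEmbedding_of_det_ne_zero [FiniteDimensional ℝ E] (hΩ : IsOpen Ω)
    (hp : p ≠ 0) (hmaps : MapsTo φ Ω Ω) (hφ : ContDiffOn ℝ p φ Ω) (hinj : InjOn φ Ω)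
    (hdet : ∀ x ∈ Ω, (fderivWithin ℝ φ Ω x).det ≠ 0) : IsContDiffSelfEmbedding p φ Ω := by
  refine ⟨hmaps, hinj, hφ, fun x hx => ?_⟩
  have hdiff : DifferentiableAt ℝ φ x :=
    (hφ.contDiffAt (hΩ.mem_nhds hx)).differentiableAt (by exact_mod_cast hp)
  have hdet' := hdet x hx
  rw [fderivWithin_of_isOpen hΩ hx] at hdet'
  exact ⟨(fderiv ℝ φ x).toContinuousLinearEquivOfDetNeZero hdet', by simpa using hdiff.hasFDerivAt⟩

end SelfEmbedding

section WeightedComposition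

variable {X 𝕂 : Type*} [Field 𝕂] {Ω C : Set X} {φ : X → X} {w g : X → 𝕂} {x : X}

def weightedComp (w : X → 𝕂) (φ : X → X) (g : X → 𝕂) : X → 𝕂 := fun x => w x * g (φ x)

theorem iterate_weightedComp_apply_eq_zero {n : ℕ} (h : g (φ^[n] x) = 0) :
    (weightedComp w φ)^[n] g x = 0 := by
  induction n generalizing g with
  | zero => exact h
  | succ n ih =>
    rw [iterate_succ_apply]
    apply ih
    rw [weightedComp, ← iterate_succ_apply' φ, h, mul_zero]

variable [Nonempty X]

noncomputable def weightedCompInv (w : X → 𝕂) (φ : X → X) (Ω : Set X) (g : X → 𝕂) : X → 𝕂 :=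
  (φ '' Ω).indicator fun y => g (invFunOn φ Ω y) / w (invFunOn φ Ω y)

theorem weightedComp_weightedCompInv (hinj : InjOn φ Ω) (hx : x ∈ Ω) (hw : w x ≠ 0) :
    weightedComp w φ (weightedCompInv w φ Ω g) x = g x := by
  rw [weightedComp, weightedCompInv, indicator_of_mem (mem_image_of_mem φ hx),
    hinj.leftInvOn_invFunOn hx, mul_div_cancel₀ _ hw]

theorem weightedCompInv_eq_zero_of_notMem (hg : ∀ y ∉ C, g y = 0) (hx : x ∉ φ '' C) :
    weightedCompInv w φ Ω g x = 0 := by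
  by_cases hxΩ : x ∈ φ '' Ω
  · rw [weightedCompInv, indicator_of_mem hxΩ, hg _ fun hC => hx ⟨_, hC, invFunOn_eq hxΩ⟩,
      zero_div]
  · exact indicator_of_notMem hxΩ _

theorem iterate_weightedCompInv_eq_zero_of_notMem {n : ℕ} (hg : ∀ y ∉ C, g y = 0)
    (hx : x ∉ φ^[n] '' C) : (weightedCompInv w φ Ω)^[n] g x = 0 := by
  induction n generalizing g C with
  | zero => exact hg x (by simpa using hx)
  | succ n ih =>
    rw [iterate_succ, image_comp] at hx
    rw [iterate_succ_apply]
    exact ih (fun y hy => weightedCompInv_eq_zero_of_notMem hg hy) hx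

end WeightedComposition

section OrbitSum

variable {X 𝕂 : Type*} [Nonempty X] [Field 𝕂] {Ω C L : Set X} {φ : X → X} {w g : X → 𝕂}
  {x : X}

/-- `orbitTerm w φ Ω g k` is `T^k g` for `T = weightedComp w φ`, negative powers being those of
the partial inverse `weightedCompInv w φ Ω`. -/
noncomputable def orbitTerm (w : X → 𝕂) (φ : X → X) (Ω : Set X) (g : X → 𝕂) : ℤ → X → 𝕂
  | (n : ℕ) => (weightedComp w φ)^[n] g
  | .negSucc n => (weightedCompInv w φ Ω)^[n + 1] g

theorem weightedComp_orbitTerm (hinj : InjOn φ Ω) (hx : x ∈ Ω) (hw : w x ≠ 0) (k : ℤ) :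
    weightedComp w φ (orbitTerm w φ Ω g k) x = orbitTerm w φ Ω g (k + 1) x := by
  match k with
  | (n : ℕ) => simp only [orbitTerm, ← iterate_succ_apply' (weightedComp w φ)]; rfl
  | .negSucc 0 => exact weightedComp_weightedCompInv hinj hx hw
  | .negSucc (n + 1) =>
    rw [orbitTerm, iterate_succ_apply', weightedComp_weightedCompInv hinj hx hw]
    rfl

theorem orbitTerm_eq_zero (hg : ∀ y ∉ C, g y = 0) {M : ℕ}
    (hM : ∀ n, M ≤ n → Disjoint (φ^[n] '' L) C ∧ Disjoint (φ^[n] '' C) L) {k : ℤ}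
    (hk : k ∉ Finset.Ioo (-(M : ℤ)) M) (hx : x ∈ L) : orbitTerm w φ Ω g k x = 0 := by
  rw [Finset.mem_Ioo, not_and_or, not_lt, not_lt] at hk
  match k with
  | (n : ℕ) =>
    refine iterate_weightedComp_apply_eq_zero (hg _ fun hC => ?_)
    exact (hM n (by omega)).1.ne_of_mem (mem_image_of_mem _ hx) hC rfl
  | .negSucc n =>
    refine iterate_weightedCompInv_eq_zero_of_notMem hg fun hC => ?_
    exact (hM (n + 1) (by omega)).2.ne_of_mem hC hx rfl

variable [TopologicalSpace 𝕂]

noncomputable def orbitSum (w : X → 𝕂) (φ : X → X) (Ω : Set X) (g : X → 𝕂) : X → 𝕂 :=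
  fun x => ∑' k, orbitTerm w φ Ω g k x

theorem orbitSum_eq_sum (hg : ∀ y ∉ C, g y = 0) {M : ℕ}
    (hM : ∀ n, M ≤ n → Disjoint (φ^[n] '' L) C ∧ Disjoint (φ^[n] '' C) L) (hx : x ∈ L) :
    orbitSum w φ Ω g x = ∑ k ∈ Finset.Ioo (-(M : ℤ)) M, orbitTerm w φ Ω g k x :=
  tsum_eq_sum fun _ hk => orbitTerm_eq_zero hg hM hk hx

theorem orbitSum_eq_of_mem (hg : ∀ y ∉ C, g y = 0)
    (hC : ∀ n, 0 < n → Disjoint (φ^[n] '' C) C) (hx : x ∈ C) : orbitSum w φ Ω g x = g x := by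
  rw [orbitSum_eq_sum hg (M := 1) (fun n hn => ⟨hC n hn, hC n hn⟩) hx,
    show Finset.Ioo (-((1 : ℕ) : ℤ)) (1 : ℕ) = {0} by decide, Finset.sum_singleton]
  rfl

variable [IsTopologicalRing 𝕂] [T2Space 𝕂]

theorem weightedComp_orbitSum (hinj : InjOn φ Ω) (hx : x ∈ Ω) (hw : w x ≠ 0) :
    weightedComp w φ (orbitSum w φ Ω g) x = orbitSum w φ Ω g x :=
  calc w x * ∑' k, orbitTerm w φ Ω g k (φ x)
      = ∑' k, weightedComp w φ (orbitTerm w φ Ω g k) x := tsum_mul_left.symm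
    _ = ∑' k, orbitTerm w φ Ω g (k + 1) x := tsum_congr (weightedComp_orbitTerm hinj hx hw)
    _ = ∑' k, orbitTerm w φ Ω g k x := (Equiv.addRight 1).tsum_eq fun k => orbitTerm w φ Ω g k x

end OrbitSum

section Smoothness

variable {𝕂 E : Type*} [RCLike 𝕂] [NormedAddCommGroup E] [NormedSpace ℝ E]
  {Ω C : Set E} {φ : E → E} {w g : E → 𝕂} {p : ℕ∞}

theorem contDiffOn_iterate_weightedComp (hw : ContDiffOn ℝ p w Ω) (hφ : ContDiffOn ℝ p φ Ω)
    (hmaps : MapsTo φ Ω Ω) (hg : ContDiffOn ℝ p g Ω) (n : ℕ) :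
    ContDiffOn ℝ p ((weightedComp w φ)^[n] g) Ω :=
  Iterate.rec (fun f => ContDiffOn ℝ p f Ω) hg (fun _ h => hw.mul (h.comp hφ hmaps)) n

variable [CompleteSpace E]

theorem contDiffOn_weightedCompInv (hΩ : IsOpen Ω) (hp : p ≠ 0)
    (hφ : IsContDiffSelfEmbedding p φ Ω) (hw : ContDiffOn ℝ p w Ω) (hw0 : ∀ x ∈ Ω, w x ≠ 0)
    (hg : ContDiffOn ℝ p g Ω) (hgC : ∀ y ∉ C, g y = 0) (hC : IsCompact C) (hCΩ : C ⊆ Ω) :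
    ContDiffOn ℝ p (weightedCompInv w φ Ω g) Ω := by
  refine contDiffOn_of_locally_contDiffOn fun x _ => ?_
  by_cases hxC : x ∈ φ '' C
  · have hσ := contDiffOn_invFunOn_image hΩ hp hφ.contDiffOn hφ.injOn hφ.hasFDerivAt_equiv
    have hσΩ : MapsTo (invFunOn φ Ω) (φ '' Ω) Ω := fun _ hy => invFunOn_mem hy
    refine ⟨φ '' Ω, isOpen_image_of_hasFDerivAt_equiv hΩ hp hφ.contDiffOn hφ.hasFDerivAt_equiv,
      image_mono hCΩ hxC, ?_⟩
    refine ((hg.comp hσ hσΩ).mul ((hw.comp hσ hσΩ).inv fun y hy => hw0 _ (hσΩ hy))).mono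
      inter_subset_right |>.congr fun y hy => ?_
    rw [weightedCompInv, indicator_of_mem hy.2, div_eq_mul_inv]
    rfl
  · refine ⟨(φ '' C)ᶜ, (hC.image_of_continuousOn
      (hφ.contDiffOn.continuousOn.mono hCΩ)).isClosed.isOpen_compl, hxC, ?_⟩
    exact contDiffOn_const.congr fun y hy => weightedCompInv_eq_zero_of_notMem hgC hy.2

theorem contDiffOn_iterate_weightedCompInv (hΩ : IsOpen Ω) (hp : p ≠ 0)
    (hφ : IsContDiffSelfEmbedding p φ Ω) (hw : ContDiffOn ℝ p w Ω) (hw0 : ∀ x ∈ Ω, w x ≠ 0)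
    (hg : ContDiffOn ℝ p g Ω) (hgC : ∀ y ∉ C, g y = 0) (hC : IsCompact C) (hCΩ : C ⊆ Ω)
    (n : ℕ) : ContDiffOn ℝ p ((weightedCompInv w φ Ω)^[n] g) Ω := by
  induction n generalizing g C with
  | zero => exact hg
  | succ n ih =>
    rw [iterate_succ_apply]
    exact ih (contDiffOn_weightedCompInv hΩ hp hφ hw hw0 hg hgC hC hCΩ)
      (fun y hy => weightedCompInv_eq_zero_of_notMem hgC hy)
      (hC.image_of_continuousOn (hφ.contDiffOn.continuousOn.mono hCΩ))
      (hφ.mapsTo.mono_left hCΩ).image_subset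

theorem contDiffOn_orbitTerm (hΩ : IsOpen Ω) (hp : p ≠ 0)
    (hφ : IsContDiffSelfEmbedding p φ Ω) (hw : ContDiffOn ℝ p w Ω) (hw0 : ∀ x ∈ Ω, w x ≠ 0)
    (hg : ContDiffOn ℝ p g Ω) (hgC : ∀ y ∉ C, g y = 0) (hC : IsCompact C) (hCΩ : C ⊆ Ω)
    (k : ℤ) : ContDiffOn ℝ p (orbitTerm w φ Ω g k) Ω :=
  match k with
  | (n : ℕ) => contDiffOn_iterate_weightedComp hw hφ.contDiffOn hφ.mapsTo hg n
  | .negSucc n => contDiffOn_iterate_weightedCompInv hΩ hp hφ hw hw0 hg hgC hC hCΩ (n + 1)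

theorem contDiffOn_orbitSum [LocallyCompactSpace E] (hΩ : IsOpen Ω) (hp : p ≠ 0)
    (hφ : IsContDiffSelfEmbedding p φ Ω) (hra : IsStronglyRunAway φ Ω)
    (hw : ContDiffOn ℝ p w Ω) (hw0 : ∀ x ∈ Ω, w x ≠ 0)
    (hg : ContDiffOn ℝ p g Ω) (hgC : ∀ y ∉ C, g y = 0) (hC : IsCompact C) (hCΩ : C ⊆ Ω) :
    ContDiffOn ℝ p (orbitSum w φ Ω g) Ω := by
  intro x₀ hx₀
  obtain ⟨L, hL, hx₀L, hLΩ⟩ := exists_compact_subset hΩ hx₀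
  obtain ⟨M, hM⟩ := eventually_atTop.mp <| (hra.eventually_disjoint_image hL hLΩ hC hCΩ).and
    (hra.eventually_disjoint_image hC hCΩ hL hLΩ)
  have hsum : orbitSum w φ Ω g =ᶠ[𝓝 x₀]
      fun x => ∑ k ∈ Finset.Ioo (-(M : ℤ)) M, orbitTerm w φ Ω g k x :=
    eventually_of_mem (mem_interior_iff_mem_nhds.mp hx₀L) fun x hx =>
      orbitSum_eq_sum hgC hM hx
  refine (ContDiffAt.congr_of_eventuallyEq ?_ hsum).contDiffWithinAt
  exact ContDiffAt.sum fun k _ =>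
    (contDiffOn_orbitTerm hΩ hp hφ hw hw0 hg hgC hC hCΩ k).contDiffAt (hΩ.mem_nhds hx₀)

end Smoothness

theorem exists_contDiff_eqOn_one_tsupport_subset {E : Type*} [NormedAddCommGroup E]
    [NormedSpace ℝ E] [FiniteDimensional ℝ E] {K Ω : Set E} (hK : IsCompact K)
    (hΩ : IsOpen Ω) (hKΩ : K ⊆ Ω) (n : ℕ∞) :
    ∃ χ : E → ℝ, ContDiff ℝ n χ ∧ EqOn χ 1 K ∧ IsCompact (tsupport χ) ∧ tsupport χ ⊆ Ω := by
  obtain ⟨L, hL, hKL, hLΩ⟩ := exists_compact_between hK hΩ hKΩ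
  obtain ⟨χ, hχK, hχL, -⟩ :=
    exists_contMDiffMap_one_nhds_of_subset_interior 𝓘(ℝ, E) hK.isClosed hKL (n := n)
  have hχL' : tsupport χ ⊆ L := closure_minimal (support_subset_iff'.mpr hχL) hL.isClosed
  exact ⟨χ, χ.contMDiff.contDiff, fun x hx => hχK.self_of_nhdsSet x hx,
    hL.of_isClosed_subset (isClosed_tsupport _) hχL', hχL'.trans hLΩ⟩

/-- If `ψ` is an injective `C^p` self-map of the open set `Ω ⊆ ℝ^d` with everywhere
invertible derivative which is strongly run-away, and `ω` is a zero-free `C^p` multiplier,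
then every `C^p` function `f` agrees on any given compact set `K ⊆ Ω` with some `C^p`
function `g` which is a periodic point of `C_{ω,ψ}`: `C_{ω,ψ}^N g = g` for some `N ≥ 1`. -/
theorem stmt_8 {𝕂 : Type*} [RCLike 𝕂] {d : ℕ} (Ω : Set (Fin d → ℝ)) (hΩ : IsOpen Ω)
    (p : ℕ∞) (hp : 1 ≤ p)
    (ψ : (Fin d → ℝ) → (Fin d → ℝ)) (hmaps : Set.MapsTo ψ Ω Ω)
    (hψ : ContDiffOn ℝ p ψ Ω) (hinj : Set.InjOn ψ Ω)
    (hdet : ∀ x ∈ Ω, (fderivWithin ℝ ψ Ω x).det ≠ 0)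
    (hsra : ∀ K : Set (Fin d → ℝ), K ⊆ Ω → IsCompact K →
      ∃ N : ℕ, ∀ n, N ≤ n → (ψ^[n] '' K) ∩ K = ∅)
    (ω : (Fin d → ℝ) → 𝕂) (hω : ContDiffOn ℝ p ω Ω) (hω0 : ∀ x ∈ Ω, ω x ≠ 0) :
    ∀ f : (Fin d → ℝ) → 𝕂, ContDiffOn ℝ p f Ω →
      ∀ K : Set (Fin d → ℝ), IsCompact K → K ⊆ Ω →
        ∃ N : ℕ, 1 ≤ N ∧ ∃ g : (Fin d → ℝ) → 𝕂, ContDiffOn ℝ p g Ω ∧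
          (∀ x ∈ K, g x = f x) ∧
          ∀ x ∈ Ω, (∏ j ∈ Finset.range N, ω (ψ^[j] x)) * g (ψ^[N] x) = g x := by
  intro f hf K hK hKΩ
  have hp0 : p ≠ 0 := (zero_lt_one.trans_le hp).ne'
  have hemb := isContDiffSelfEmbedding_of_det_ne_zero hΩ hp0 hmaps hψ hinj hdet
  have hra : IsStronglyRunAway ψ Ω := hsra
  obtain ⟨χ, hχ, hχK, hC, hCΩ⟩ := exists_contDiff_eqOn_one_tsupport_subset hK hΩ hKΩ p
  obtain ⟨N₀, hN₀⟩ := eventually_atTop.mp (hra.eventually_disjoint_image hC hCΩ hC hCΩ)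
  set N := N₀ + 1
  set W : (Fin d → ℝ) → 𝕂 := fun x => ∏ j ∈ Finset.range N, ω (ψ^[j] x)
  have hW : ContDiffOn ℝ p W Ω :=
    contDiffOn_prod fun j _ => hω.comp (hemb.iterate j).contDiffOn (hemb.iterate j).mapsTo
  have hW0 : ∀ x ∈ Ω, W x ≠ 0 := fun x hx =>
    Finset.prod_ne_zero_iff.mpr fun j _ => hω0 _ ((hemb.iterate j).mapsTo hx)
  have hFC : ∀ y ∉ tsupport χ, χ y • f y = 0 := fun y hy => by
    rw [image_eq_zero_of_notMem_tsupport hy, zero_smul]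
  have hdisj : ∀ n, 0 < n → Disjoint ((ψ^[N])^[n] '' tsupport χ) (tsupport χ) := fun n hn => by
    rw [← iterate_mul]
    exact hN₀ _ ((Nat.le_succ N₀).trans (Nat.le_mul_of_pos_right N hn))
  refine ⟨N, by omega, orbitSum W ψ^[N] Ω fun x => χ x • f x,
    contDiffOn_orbitSum hΩ hp0 (hemb.iterate N) (hra.iterate N₀.succ_pos) hW hW0
      (hχ.contDiffOn.smul hf) hFC hC hCΩ, fun x hx => ?_,
    fun x hx => weightedComp_orbitSum (hemb.iterate N).injOn hx (hW0 x hx)⟩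
  rw [orbitSum_eq_of_mem hFC hdisj (subset_tsupport χ (by simp [hχK hx])), hχK hx, Pi.one_apply,
    one_smul]
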